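/- If f : H_n → H_n is an additive commuting map, then for all 2 ≤ i, j ≤ n−1: (a) f_{j,n}(e_{1,i}) = −f_{i,n}(e_{1,j}); (b) f_{1,j}(e_{1,i}) = f_{i,n}(e_{j,n}); (c) f_{1,j}(e_{i,n}) = −f_{1,i}(e_{j,n}), where f_{1,k}(X) and f_{k,n}(X) denote the (1,k)- and (k,n)-entries of f(X). -/

import Mathlib

open Matrix

/-- `X` belongs to the Heisenberg algebra `H_n`: its only possibly nonzero entries lie
in the first row strictly above the diagonal or the last column strictly above the diagonal
(0-based indices: row 0 with column ≠ 0, or column `n-1` with row ≠ `n-1`). -/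
def IsHeis {n : ℕ} {F : Type*} [Field F] (X : Matrix (Fin n) (Fin n) F) : Prop :=
  ∀ i j : Fin n, ¬ ((i.val = 0 ∧ j.val ≠ 0) ∨ (j.val = n - 1 ∧ i.val ≠ n - 1)) → X i j = 0

/-- Anti-transpose: `(antiT X) i j = X (rev j) (rev i)`. -/
def antiT {n : ℕ} {F : Type*} [Field F] (X : Matrix (Fin n) (Fin n) F) :
    Matrix (Fin n) (Fin n) F :=
  Matrix.of fun i j => X j.rev i.rev

/-- `A ∈ C_n`: first and last rows and columns of `A` are zero. -/
def IsC {n : ℕ} {F : Type*} [Field F] (A : Matrix (Fin n) (Fin n) F) : Prop :=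
  ∀ i j : Fin n, (i.val = 0 ∨ i.val = n - 1 ∨ j.val = 0 ∨ j.val = n - 1) → A i j = 0

/-- `A ∈ P_n`: hollow skew-persymmetric matrices in `C_n`. -/
def IsP {n : ℕ} {F : Type*} [Field F] (A : Matrix (Fin n) (Fin n) F) : Prop :=
  IsC A ∧ (∀ i j : Fin n, antiT A i j = - A i j) ∧ (∀ i : Fin n, A i i.rev = 0)

/-! Linearizing `f(X) X = X f(X)` by additivity gives `[f(X), Y] = [X, f(Y)]` for all
`X, Y ∈ H_n`. For matrix units `e_{1,i}` and `e_{j,n}`, the `(1,n)`-entry of either side of this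
identity is a single entry of `f`, which yields the three relations. -/

theorem mul_sub_mul_eq_of_commute_of_map_add {R : Type*} [NonUnitalNonAssocRing R]
    {f : R → R} {x y : R} (hadd : f (x + y) = f x + f y) (hx : Commute (f x) x)
    (hy : Commute (f y) y) (hxy : Commute (f (x + y)) (x + y)) :
    f x * y - y * f x = x * f y - f y * x := by
  have h := hxy.eq
  simp only [hadd, add_mul, mul_add, hx.eq, hy.eq] at h
  rw [sub_eq_sub_iff_add_eq_add]
  linear_combination (norm := abel) h

section Heisenberg

variable {n : ℕ} {F : Type*} [Field F]

theorem IsHeis.add {X Y : Matrix (Fin n) (Fin n) F} (hX : IsHeis X) (hY : IsHeis Y) :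
    IsHeis (X + Y) := fun i j hij => by rw [Matrix.add_apply, hX i j hij, hY i j hij, add_zero]

theorem isHeis_single_zero_left (i k : Fin n) (hi : i.val = 0) (hk : k.val ≠ 0) (c : F) :
    IsHeis (single i k c) := by
  intro p q hpq
  apply single_apply_of_ne
  rintro ⟨rfl, rfl⟩
  exact hpq (Or.inl ⟨hi, hk⟩)

theorem isHeis_single_last_right (k j : Fin n) (hj : j.val = n - 1) (hk : k.val ≠ n - 1)
    (c : F) : IsHeis (single k j c) := by
  intro p q hpq
  apply single_apply_of_ne
  rintro ⟨rfl, rfl⟩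
  exact hpq (Or.inr ⟨hj, hk⟩)

theorem map_mul_sub_mul_eq_of_isHeis
    {f : Matrix (Fin n) (Fin n) F → Matrix (Fin n) (Fin n) F}
    (hadd : ∀ X Y, IsHeis X → IsHeis Y → f (X + Y) = f X + f Y)
    (hcomm : ∀ X, IsHeis X → f X * X = X * f X) {X Y : Matrix (Fin n) (Fin n) F}
    (hX : IsHeis X) (hY : IsHeis Y) : f X * Y - Y * f X = X * f Y - f Y * X :=
  mul_sub_mul_eq_of_commute_of_map_add (hadd X Y hX hY) (hcomm X hX) (hcomm Y hY)
    (hcomm _ (hX.add hY))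

end Heisenberg

theorem stmt10 {n : ℕ} (hn : 3 ≤ n) {F : Type*} [Field F]
    (f : Matrix (Fin n) (Fin n) F → Matrix (Fin n) (Fin n) F)
    (hadd : ∀ X Y, IsHeis X → IsHeis Y → f (X + Y) = f X + f Y)
    (hcomm : ∀ X, IsHeis X → f X * X = X * f X) :
    ∀ i j : Fin n, 1 ≤ i.val → i.val ≤ n - 2 → 1 ≤ j.val → j.val ≤ n - 2 →
      f (Matrix.single ⟨0, by omega⟩ i (1 : F)) j ⟨n - 1, by omega⟩ =
        - f (Matrix.single ⟨0, by omega⟩ j (1 : F)) i ⟨n - 1, by omega⟩ ∧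
      f (Matrix.single ⟨0, by omega⟩ i (1 : F)) ⟨0, by omega⟩ j =
        f (Matrix.single j ⟨n - 1, by omega⟩ (1 : F)) i ⟨n - 1, by omega⟩ ∧
      f (Matrix.single i ⟨n - 1, by omega⟩ (1 : F)) ⟨0, by omega⟩ j =
        - f (Matrix.single j ⟨n - 1, by omega⟩ (1 : F)) ⟨0, by omega⟩ i := by
  intro i j hi₁ hi₂ hj₁ hj₂
  set first : Fin n := ⟨0, by omega⟩
  set last : Fin n := ⟨n - 1, by omega⟩
  have hi_first : first ≠ i := Fin.ne_of_val_ne (by dsimp [first]; omega)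
  have hj_first : first ≠ j := Fin.ne_of_val_ne (by dsimp [first]; omega)
  have hi_last : last ≠ i := Fin.ne_of_val_ne (by dsimp [last]; omega)
  have hj_last : last ≠ j := Fin.ne_of_val_ne (by dsimp [last]; omega)
  have row (k : Fin n) (hk : first ≠ k) : IsHeis (single first k (1 : F)) :=
    isHeis_single_zero_left _ _ rfl (Fin.val_ne_of_ne hk).symm 1
  have col (k : Fin n) (hk : last ≠ k) : IsHeis (single k last (1 : F)) :=
    isHeis_single_last_right _ _ rfl (Fin.val_ne_of_ne hk).symm 1
  have corner {X Y} (hX : IsHeis X) (hY : IsHeis Y) :=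
    congrFun₂ (map_mul_sub_mul_eq_of_isHeis hadd hcomm hX hY) first last
  have ha := corner (row i hi_first) (row j hj_first)
  have hb := corner (row i hi_first) (col j hj_last)
  have hc := corner (col i hi_last) (col j hj_last)
  simp only [Matrix.sub_apply, single_mul_apply_same, mul_single_apply_same, ne_eq,
    single_mul_apply_of_ne, mul_single_apply_of_ne, hi_first, hj_first, hi_last, hj_last,
    not_false_eq_true, one_mul, mul_one, sub_zero, zero_sub] at ha hb hc
  exact ⟨by linear_combination -ha, by linear_combination hb, by linear_combination hc⟩
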